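/- arXiv:1005.2636 — 7 statements merged into one kernel-verified Lean document; each statement's English description precedes it below -/
import Mathlib

section
/- Let α be a linearly ordered type, and let T be a finitely branching tree over α (a set of finite words over α closed under prefixes, such that for every t ∈ T the set of symbols a with t·a ∈ T is finite). Let [T] denote the set of infinite branches of T, let < denote the lexicographic order (a word is less than any of its proper extensions, and otherwise words are compared at the first index where they differ), and for a node v and branch P set v < P iff v < w for some finite prefix w of P. Define T' = {v ∈ T : v < P for every P ∈ [T]}. Then every element of T' has only finitely many lexicographic predecessors within T', i.e., for every v ∈ T' the set {w ∈ T' : w < v} is finite. -/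
/-!
The lexicographic predecessors of `v` in `T` form a finitely branching subtree `S` of `T`. If `S`
were infinite, Kőnig's lemma would give an infinite branch `P` of `S`, hence of `T`. Since `v ∈ T'`,
`v` lies below some finite prefix of `P`; but that prefix is a node of `S`, so it lies below `v`.
-/

/-- `T` is a tree over `α`: a set of finite words closed under taking prefixes. -/
def IsTree {α : Type*} (T : Set (List α)) : Prop :=
  ∀ t ∈ T, ∀ s : List α, s <+: t → s ∈ T

/-- `T` is finitely branching: each node has only finitely many children. -/
def FinitelyBranching {α : Type*} (T : Set (List α)) : Prop :=
  ∀ t ∈ T, {a : α | t ++ [a] ∈ T}.Finite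

/-- `P : ℕ → α` is an infinite branch of `T`: all of its finite initial segments lie in `T`. -/
def IsBranch {α : Type*} (T : Set (List α)) (P : ℕ → α) : Prop :=
  ∀ n : ℕ, (List.ofFn fun i : Fin n => P i) ∈ T

/-- A node `v` is lexicographically below a branch `P` iff `v < w` for some finite
prefix `w` of `P`. -/
def NodeLtBranch {α : Type*} [LinearOrder α] (v : List α) (P : ℕ → α) : Prop :=
  ∃ n : ℕ, List.Lex (· < ·) v (List.ofFn fun i : Fin n => P i)

/-- `T' = {v ∈ T : v < P for every infinite branch P of T}`. -/
def Tprime {α : Type*} [LinearOrder α] (T : Set (List α)) : Set (List α) :=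
  {v ∈ T | ∀ P : ℕ → α, IsBranch T P → NodeLtBranch v P}

section Konig

variable {α : Type*} {S T : Set (List α)}

lemma FinitelyBranching.mono (hFB : FinitelyBranching T) (hST : S ⊆ T) : FinitelyBranching S :=
  fun t ht => (hFB t (hST ht)).subset fun _ ha => hST ha

lemma IsBranch.mono {P : ℕ → α} (hP : IsBranch S P) (hST : S ⊆ T) : IsBranch T P :=
  fun n => hST (hP n)

def extensions (S : Set (List α)) (t : List α) : Set (List α) :=
  {w ∈ S | t <+: w}

lemma IsTree.mem_of_extensions_nonempty (hS : IsTree S) {t : List α}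
    (ht : (extensions S t).Nonempty) : t ∈ S :=
  let ⟨w, hwS, htw⟩ := ht
  hS w hwS t htw

lemma IsTree.extensions_subset (hS : IsTree S) (t : List α) :
    extensions S t ⊆ insert t (⋃ a ∈ {a | t ++ [a] ∈ S}, extensions S (t ++ [a])) := by
  rintro w ⟨hwS, r, rfl⟩
  cases r with
  | nil => exact Or.inl (List.append_nil t)
  | cons a r =>
    have hprefix : t ++ [a] <+: t ++ a :: r := ⟨r, by simp⟩
    exact Or.inr (Set.mem_biUnion (hS _ hwS _ hprefix) ⟨hwS, hprefix⟩)

lemma IsTree.exists_infinite_extensions_append (hS : IsTree S) (hFB : FinitelyBranching S)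
    {t : List α} (ht : (extensions S t).Infinite) :
    ∃ a, (extensions S (t ++ [a])).Infinite := by
  by_contra! hfin
  have hchildren := hFB t (hS.mem_of_extensions_nonempty ht.nonempty)
  exact ht (((hchildren.biUnion fun a _ => hfin a).insert t).subset (hS.extensions_subset t))

/-- **Kőnig's lemma** for trees of words. -/
theorem IsTree.exists_isBranch_of_infinite (hS : IsTree S) (hFB : FinitelyBranching S)
    (hinf : S.Infinite) : ∃ P, IsBranch S P := by
  let Node := {t : List α // (extensions S t).Infinite}
  let next (t : Node) : α := (hS.exists_infinite_extensions_append hFB t.2).choose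
  let child (t : Node) : Node :=
    ⟨t.1 ++ [next t], (hS.exists_infinite_extensions_append hFB t.2).choose_spec⟩
  let root : Node := ⟨[], hinf.mono fun w hw => ⟨hw, List.nil_prefix⟩⟩
  refine ⟨fun n => next (child^[n] root), fun n => ?_⟩
  have hprefix : (List.ofFn fun i : Fin n => next (child^[i] root)) = (child^[n] root).1 := by
    induction n with
    | zero => rfl
    | succ n ih =>
      rw [List.ofFn_succ_last, Function.iterate_succ_apply']
      simp only [Fin.val_castSucc, Fin.val_last, ih]
      rfl
  exact hprefix ▸ hS.mem_of_extensions_nonempty (child^[n] root).2.nonempty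

end Konig

section Lex

variable {α : Type*} [LinearOrder α]

lemma List.IsPrefix.lex_lt_of_ne {s w : List α} (h : s <+: w) (hne : s ≠ w) :
    List.Lex (· < ·) s w := by
  obtain ⟨t, rfl⟩ := h
  cases t with
  | nil => exact absurd (List.append_nil s).symm hne
  | cons a t => simpa using List.Lex.append_left (· < ·) (List.Lex.nil (a := a) (l := t)) s

lemma IsTree.lex_predecessors {T : Set (List α)} (hT : IsTree T) (v : List α) :
    IsTree {w ∈ T | List.Lex (· < ·) w v} := by
  rintro w ⟨hwT, hwv⟩ s hsw
  refine ⟨hT w hwT s hsw, ?_⟩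
  rcases eq_or_ne s w with rfl | hne
  · exact hwv
  · exact List.lt_trans (hsw.lex_lt_of_ne hne) hwv

end Lex

/-- Every element of `T'` has only finitely many lexicographic predecessors within `T'`. -/
theorem finitely_many_predecessors {α : Type*} [LinearOrder α] (T : Set (List α))
    (hT : IsTree T) (hFB : FinitelyBranching T) :
    ∀ v ∈ Tprime T, {w ∈ Tprime T | List.Lex (· < ·) w v}.Finite := by
  intro v hv
  let S := {w ∈ T | List.Lex (· < ·) w v}
  refine Set.Finite.subset (s := S) ?_ fun w hw => ⟨hw.1.1, hw.2⟩
  by_contra hinf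
  obtain ⟨P, hP⟩ :=
    (hT.lex_predecessors v).exists_isBranch_of_infinite (hFB.mono (Set.sep_subset _ _)) hinf
  obtain ⟨n, hvP⟩ := hv.2 P (hP.mono (Set.sep_subset _ _))
  exact asymm hvP (hP n).2
end

section
/- Let α be a linearly ordered type and T a finitely branching tree over α. If the set [T] of infinite branches of T is nonempty, then [T] has a lexicographically minimal element: there exists P ∈ [T] such that for every P' ∈ [T] with P' ≠ P, at the first index n where P and P' differ, P n < P' n. -/
section

variable {α : Type*} {T : Set (List α)}

theorem List.ofFn_nat_succ_eq_append (P : ℕ → α) (n : ℕ) :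
    (List.ofFn fun i : Fin (n + 1) => P i) = (List.ofFn fun i : Fin n => P i) ++ [P n] :=
  List.ofFn_succ_last

theorem Function.exists_forall_lt_eq_and_ne {β : Type*} {f g : ℕ → β} (h : f ≠ g) :
    ∃ n, (∀ k < n, f k = g k) ∧ f n ≠ g n := by
  classical
  have hex : ∃ n, f n ≠ g n := Function.ne_iff.mp h
  exact ⟨Nat.find hex, fun k hk => not_not.mp (Nat.find_min hex hk), Nat.find_spec hex⟩

def ExtendsToBranch (T : Set (List α)) (t : List α) : Prop :=
  ∃ Q : ℕ → α, IsBranch T Q ∧ ∃ n, (List.ofFn fun i : Fin n => Q i) = t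

theorem IsBranch.extendsToBranch_ofFn {Q : ℕ → α} (hQ : IsBranch T Q) (n : ℕ) :
    ExtendsToBranch T (List.ofFn fun i : Fin n => Q i) :=
  ⟨Q, hQ, n, rfl⟩

namespace ExtendsToBranch

variable {t : List α}

theorem mem (h : ExtendsToBranch T t) : t ∈ T := by
  obtain ⟨Q, hQ, n, rfl⟩ := h
  exact hQ n

theorem exists_append (h : ExtendsToBranch T t) : ∃ a, ExtendsToBranch T (t ++ [a]) := by
  obtain ⟨Q, hQ, n, rfl⟩ := h
  refine ⟨Q n, ?_⟩
  rw [← List.ofFn_nat_succ_eq_append]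
  exact hQ.extendsToBranch_ofFn (n + 1)

theorem exists_isLeast_append [LinearOrder α] (hFB : FinitelyBranching T)
    (h : ExtendsToBranch T t) : ∃ a, IsLeast {a | ExtendsToBranch T (t ++ [a])} a := by
  have hfin : {a | ExtendsToBranch T (t ++ [a])}.Finite := (hFB t h.mem).subset fun _ ha => ha.mem
  have hne : hfin.toFinset.Nonempty := by simpa [Set.Nonempty] using h.exists_append
  exact ⟨_, by simpa using hfin.toFinset.isLeast_min' hne⟩

end ExtendsToBranch

def greedySeq (m : List α → α) (n : ℕ) : α :=
  m (List.ofFn fun i : Fin n => greedySeq m i)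

variable {m : List α → α}

theorem extendsToBranch_greedySeq
    (hm : ∀ t, ExtendsToBranch T t → ExtendsToBranch T (t ++ [m t])) (h0 : ExtendsToBranch T []) (n : ℕ) :
    ExtendsToBranch T (List.ofFn fun i : Fin n => greedySeq m i) := by
  induction n with
  | zero => simpa using h0
  | succ n ih =>
    rw [List.ofFn_nat_succ_eq_append, greedySeq]
    exact hm _ ih

theorem isBranch_greedySeq (hm : ∀ t, ExtendsToBranch T t → ExtendsToBranch T (t ++ [m t]))
    (h0 : ExtendsToBranch T []) : IsBranch T (greedySeq m) :=
  fun n => (extendsToBranch_greedySeq hm h0 n).mem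

theorem exists_lt_of_ne_greedySeq [LinearOrder α]
    (hm : ∀ t, ExtendsToBranch T t → m t ∈ lowerBounds {a | ExtendsToBranch T (t ++ [a])})
    {P : ℕ → α} (hP : IsBranch T P) (hne : P ≠ greedySeq m) :
    ∃ n, (∀ k < n, greedySeq m k = P k) ∧ greedySeq m n < P n := by
  obtain ⟨n, hagree, hdiff⟩ := Function.exists_forall_lt_eq_and_ne hne
  have hprefix : (List.ofFn fun i : Fin n => greedySeq m i) = List.ofFn fun i : Fin n => P i := by
    simp [hagree _ _]
  have hP_child : ExtendsToBranch T ((List.ofFn fun i : Fin n => P i) ++ [P n]) := by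
    rw [← List.ofFn_nat_succ_eq_append]
    exact hP.extendsToBranch_ofFn (n + 1)
  have hle : greedySeq m n ≤ P n := by
    rw [greedySeq, hprefix]
    exact hm _ (hP.extendsToBranch_ofFn n) hP_child
  exact ⟨n, fun k hk => (hagree k hk).symm, hle.lt_of_ne (Ne.symm hdiff)⟩

end

theorem exists_min_branch_general {α : Type*} [LinearOrder α] (T : Set (List α))
    (hFB : FinitelyBranching T) (hne : ∃ P : ℕ → α, IsBranch T P) :
    ∃ P : ℕ → α, IsBranch T P ∧
      ∀ P' : ℕ → α, IsBranch T P' → P' ≠ P →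
        ∃ n : ℕ, (∀ m < n, P m = P' m) ∧ P n < P' n := by
  obtain ⟨P₀, hP₀⟩ := hne
  have : Nonempty α := ⟨P₀ 0⟩
  have h0 : ExtendsToBranch T [] := hP₀.extendsToBranch_ofFn 0
  choose! m hm using fun t (ht : ExtendsToBranch T t) => ht.exists_isLeast_append hFB
  exact ⟨greedySeq m, isBranch_greedySeq (fun t ht => (hm t ht).1) h0,
    fun _ hP hne => exists_lt_of_ne_greedySeq (fun t ht => (hm t ht).2) hP hne⟩

/-- If the set of infinite branches of a finitely branching tree is nonempty, then it
has a lexicographically minimal element: some branch `P` such that every other branch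
`P'` has a larger symbol at the first index where they differ. -/
theorem exists_min_branch {α : Type*} [LinearOrder α] (T : Set (List α))
    (hT : IsTree T) (hFB : FinitelyBranching T) (hne : ∃ P : ℕ → α, IsBranch T P) :
    ∃ P : ℕ → α, IsBranch T P ∧
      ∀ P' : ℕ → α, IsBranch T P' → P' ≠ P →
        ∃ n : ℕ, (∀ m < n, P m = P' m) ∧ P n < P' n :=
  exists_min_branch_general T hFB hne
end

section
/- Let A be a finite alphabet with m ≥ 1 symbols and let n ≥ 1. There exists a constant C (depending only on m and n) such that every word s over A with |s| ≥ C contains a nonempty contiguous subword w with the following property: for every nonempty word w' over A with |w'| ≤ n, the number of occurrences of w' as a subsequence of w, #(w, w'), is even. -/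
/-- `#(w, w')`: the number of ways in which `w'` occurs as a subsequence of `w`,
i.e. the number of strictly increasing tuples of indices
`0 ≤ x₀ < x₁ < … < x_{|w'|−1} < |w|` with `w(xᵢ) = w'(i)` for all `i`. -/
noncomputable def subseqCount {α : Type*} (w w' : List α) : ℕ :=
  Nat.card {f : Fin w'.length → Fin w.length //
    StrictMono f ∧ ∀ i : Fin w'.length, w.get (f i) = w'.get i}

section cnt

variable {α : Type*}

/-- Recursive subsequence-occurrence count. -/
def cnt [DecidableEq α] : List α → List α → ℕ
  | _, [] => 1
  | [], _ :: _ => 0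
  | a :: u, b :: v => cnt u (b :: v) + if a = b then cnt u v else 0

@[simp] lemma cnt_nil_right [DecidableEq α] (w : List α) : cnt w [] = 1 := by
  cases w <;> rfl

@[simp] lemma cnt_nil_left [DecidableEq α] (b : α) (v : List α) : cnt [] (b :: v) = 0 := rfl

@[simp] lemma cnt_cons_cons [DecidableEq α] (a b : α) (u v : List α) :
    cnt (a :: u) (b :: v) = cnt u (b :: v) + if a = b then cnt u v else 0 := rfl

lemma get_cons_pred (a : α) (t : List α) (j : Fin (t.length + 1)) (hj : j ≠ 0) :
    (a :: t).get j = t.get (j.pred hj) := by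
  rcases j with ⟨jv, hjv⟩
  cases jv with
  | zero => exact absurd (Fin.ext rfl) hj
  | succ k => rfl

lemma get_cons_succ' (a : α) (t : List α) (j : Fin t.length) :
    (a :: t).get j.succ = t.get j := rfl

/-- Strictly increasing maps avoiding `0` correspond to maps into the tail. -/
def shiftEquiv (a : α) (t : List α) (b : α) (v : List α) :
    {f : Fin (v.length + 1) → Fin (t.length + 1) //
      (StrictMono f ∧ ∀ i, (a :: t).get (f i) = (b :: v).get i) ∧ ∀ i, f i ≠ 0}
    ≃ {g : Fin (v.length + 1) → Fin t.length //
        StrictMono g ∧ ∀ i, t.get (g i) = (b :: v).get i} where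
  toFun x := ⟨fun i ↦ (x.1 i).pred (x.2.2 i),
    fun i j hij ↦ Fin.pred_lt_pred_iff.mpr (x.2.1.1 hij),
    fun i ↦ by rw [← get_cons_pred a t (x.1 i) (x.2.2 i)]; exact x.2.1.2 i⟩
  invFun g := ⟨fun i ↦ (g.1 i).succ,
    ⟨fun i j hij ↦ Fin.succ_lt_succ_iff.mpr (g.2.1 hij),
     fun i ↦ by rw [get_cons_succ']; exact g.2.2 i⟩,
    fun i ↦ Fin.succ_ne_zero _⟩
  left_inv x := Subtype.ext (funext fun i ↦ by simp)
  right_inv g := Subtype.ext (funext fun i ↦ by simp)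

/-- Strictly increasing maps sending `0` to `0` correspond to maps of the tails. -/
def consEquiv (a : α) (t v : List α) :
    {f : Fin (v.length + 1) → Fin (t.length + 1) //
      (StrictMono f ∧ ∀ i, (a :: t).get (f i) = (a :: v).get i) ∧ f 0 = 0}
    ≃ {g : Fin v.length → Fin t.length //
        StrictMono g ∧ ∀ i, t.get (g i) = v.get i} where
  toFun x := ⟨fun i ↦ (x.1 i.succ).pred (by
      have h := x.2.1.1 (show (0 : Fin (v.length + 1)) < i.succ from Fin.succ_pos i)
      rw [x.2.2] at h
      exact Fin.pos_iff_ne_zero.mp h),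
    fun i j hij ↦ Fin.pred_lt_pred_iff.mpr (x.2.1.1 (Fin.succ_lt_succ_iff.mpr hij)),
    fun i ↦ by
      rw [← get_cons_pred a t (x.1 i.succ), x.2.1.2 i.succ]
      exact get_cons_succ' a v i⟩
  invFun g := ⟨Fin.cons 0 (fun i ↦ (g.1 i).succ),
    ⟨(by
      intro i j
      induction i using Fin.cases with
      | zero =>
        induction j using Fin.cases with
        | zero => intro hij; exact absurd hij (lt_irrefl _)
        | succ c =>
          intro _
          simp only [Fin.cons_zero, Fin.cons_succ]
          exact Fin.succ_pos _
      | succ d =>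
        induction j using Fin.cases with
        | zero => intro hij; exact absurd hij (by simp)
        | succ c =>
          intro hij
          simp only [Fin.cons_succ]
          exact Fin.succ_lt_succ_iff.mpr (g.2.1 (Fin.succ_lt_succ_iff.mp hij))),
     (by
      intro i
      induction i using Fin.cases with
      | zero => simp
      | succ j =>
        simp only [Fin.cons_succ]
        rw [get_cons_succ', get_cons_succ']
        exact g.2.2 j)⟩,
    Fin.cons_zero _ _⟩
  left_inv x := Subtype.ext (funext fun i ↦ by
    induction i using Fin.cases with
    | zero => simpa using x.2.2.symm
    | succ j => simp)
  right_inv g := Subtype.ext (funext fun i ↦ by simp)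

lemma subseqCount_nil_right (w : List α) : subseqCount w [] = 1 := by
  unfold subseqCount
  rw [Nat.card_eq_one_iff_unique]
  constructor
  · exact ⟨fun x y ↦ Subtype.ext (funext fun i ↦ i.elim0)⟩
  · exact ⟨⟨fun i ↦ i.elim0, fun i ↦ i.elim0, fun i ↦ i.elim0⟩⟩

lemma subseqCount_nil_left (b : α) (v : List α) : subseqCount [] (b :: v) = 0 := by
  unfold subseqCount
  have : IsEmpty (Fin (b :: v).length → Fin ([] : List α).length) :=
    ⟨fun f ↦ (f ⟨0, Nat.succ_pos _⟩).elim0⟩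
  exact Nat.card_of_isEmpty

lemma subseqCount_cons_cons [DecidableEq α] (a b : α) (t v : List α) :
    subseqCount (a :: t) (b :: v)
      = subseqCount t (b :: v) + if a = b then subseqCount t v else 0 := by
  have h1 : subseqCount (a :: t) (b :: v)
      = Nat.card {f : Fin (v.length + 1) → Fin (t.length + 1) //
          StrictMono f ∧ ∀ i, (a :: t).get (f i) = (b :: v).get i} := rfl
  have h2 : subseqCount t (b :: v)
      = Nat.card {g : Fin (v.length + 1) → Fin t.length //
          StrictMono g ∧ ∀ i, t.get (g i) = (b :: v).get i} := rfl
  have hsplit : Nat.card {f : Fin (v.length + 1) → Fin (t.length + 1) //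
          StrictMono f ∧ ∀ i, (a :: t).get (f i) = (b :: v).get i}
      = Nat.card {f : Fin (v.length + 1) → Fin (t.length + 1) //
          (StrictMono f ∧ ∀ i, (a :: t).get (f i) = (b :: v).get i) ∧ f 0 = 0}
        + Nat.card {f : Fin (v.length + 1) → Fin (t.length + 1) //
          (StrictMono f ∧ ∀ i, (a :: t).get (f i) = (b :: v).get i) ∧ f 0 ≠ 0} := by
    rw [← Nat.card_sum]
    refine Nat.card_congr ?_
    refine Equiv.trans ?_ (Equiv.sumCongr (Equiv.subtypeSubtypeEquivSubtypeInter _ _)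
      (Equiv.subtypeSubtypeEquivSubtypeInter _ _))
    exact (Equiv.sumCompl (fun x : {f : Fin (v.length + 1) → Fin (t.length + 1) //
      StrictMono f ∧ ∀ i, (a :: t).get (f i) = (b :: v).get i} ↦ x.1 0 = 0)).symm
  have hne : Nat.card {f : Fin (v.length + 1) → Fin (t.length + 1) //
        (StrictMono f ∧ ∀ i, (a :: t).get (f i) = (b :: v).get i) ∧ f 0 ≠ 0}
      = subseqCount t (b :: v) := by
    rw [h2]
    refine Nat.card_congr (Equiv.trans ?_ (shiftEquiv a t b v))
    refine Equiv.subtypeEquivRight fun f ↦ and_congr_right fun hf ↦ ?_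
    constructor
    · intro h0 i
      exact Fin.pos_iff_ne_zero.mp
        (lt_of_lt_of_le (Fin.pos_iff_ne_zero.mpr h0) (hf.1.monotone (Fin.zero_le i)))
    · exact fun h ↦ h 0
  rw [h1, hsplit, hne]
  by_cases hab : a = b
  · subst hab
    rw [if_pos rfl]
    have := Nat.card_congr (consEquiv a t v)
    rw [this]
    have h3 : subseqCount t v
        = Nat.card {g : Fin v.length → Fin t.length //
            StrictMono g ∧ ∀ i, t.get (g i) = v.get i} := rfl
    rw [h3]
    ring
  · rw [if_neg hab]
    have : IsEmpty {f : Fin (v.length + 1) → Fin (t.length + 1) //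
        (StrictMono f ∧ ∀ i, (a :: t).get (f i) = (b :: v).get i) ∧ f 0 = 0} := by
      refine ⟨fun x ↦ ?_⟩
      have h := x.2.1.2 0
      rw [x.2.2] at h
      exact hab h
    rw [Nat.card_of_isEmpty]
    ring

lemma subseqCount_eq_cnt [DecidableEq α] (w w' : List α) : subseqCount w w' = cnt w w' := by
  induction w generalizing w' with
  | nil =>
    cases w' with
    | nil => simp [subseqCount_nil_right]
    | cons b v => simp [subseqCount_nil_left]
  | cons a t ih =>
    cases w' with
    | nil => simp [subseqCount_nil_right]
    | cons b v =>
      rw [subseqCount_cons_cons, cnt_cons_cons, ih, ih]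

/-- Convolution: occurrences in a concatenation. -/
lemma cnt_append [DecidableEq α] (u v w : List α) :
    cnt (u ++ v) w = ∑ k ∈ Finset.range (w.length + 1), cnt u (w.take k) * cnt v (w.drop k) := by
  induction u generalizing w with
  | nil =>
    rw [Finset.sum_range_succ']
    simp only [List.nil_append, List.take_zero, List.drop_zero, cnt_nil_right, one_mul]
    have hz : ∀ i ∈ Finset.range w.length,
        cnt ([] : List α) (w.take (i + 1)) * cnt v (w.drop (i + 1)) = 0 := by
      intro i hi
      rw [Finset.mem_range] at hi
      have hne : w.take (i + 1) ≠ [] := by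
        intro h
        have hl := congrArg List.length h
        rw [List.length_take] at hl
        simp only [List.length_nil] at hl
        omega
      obtain ⟨c, tl, hbt⟩ := List.exists_cons_of_ne_nil hne
      rw [hbt, cnt_nil_left, zero_mul]
    rw [Finset.sum_congr rfl hz]
    simp
  | cons a u ih =>
    cases w with
    | nil => simp
    | cons b w =>
      have hL : cnt ((a :: u) ++ v) (b :: w)
          = cnt (u ++ v) (b :: w) + if a = b then cnt (u ++ v) w else 0 := rfl
      rw [hL, ih (b :: w), ih w,
        Finset.sum_range_succ' (fun k ↦ cnt u ((b :: w).take k) * cnt v ((b :: w).drop k)),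
        Finset.sum_range_succ' (fun k ↦ cnt (a :: u) ((b :: w).take k) * cnt v ((b :: w).drop k))]
      simp only [List.take_zero, List.drop_zero, cnt_nil_right, one_mul, List.take_succ_cons,
        List.drop_succ_cons, cnt_cons_cons, List.length_cons]
      by_cases h : a = b
      · simp only [h, if_true, add_mul, Finset.sum_add_distrib]
        ring
      · simp only [h, if_false, add_zero]

/-- If the mod-2 profile of counts (for words of length ≤ n) agrees between
`p` and `p ++ w`, then all such counts of `w` are even. -/
lemma even_of_same_profile [DecidableEq α] {n : ℕ} {p w : List α}
    (h : ∀ w' : List α, w' ≠ [] → w'.length ≤ n → cnt (p ++ w) w' % 2 = cnt p w' % 2) :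
    ∀ w' : List α, w' ≠ [] → w'.length ≤ n → 2 ∣ cnt w w' := by
  have main : ∀ L, ∀ w' : List α, w'.length = L → w' ≠ [] → w'.length ≤ n → 2 ∣ cnt w w' := by
    intro L
    induction L using Nat.strong_induction_on with
    | _ L IH =>
      intro w' hLw hne hlen
      have hconv := cnt_append p w w'
      have hL0 : 0 < w'.length := List.length_pos_iff.mpr hne
      have key : cnt (p ++ w) w' % 2 = (cnt p w' + cnt w w') % 2 := by
        rw [Finset.range_eq_Ico,
          Finset.sum_eq_sum_Ico_succ_bot (show (0:ℕ) < w'.length + 1 by omega),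
          Finset.sum_Ico_succ_top (show 0 + 1 ≤ w'.length by omega)] at hconv
        simp only [List.take_zero, List.drop_zero, cnt_nil_right, one_mul, List.take_length,
          List.drop_length, mul_one] at hconv
        have hmid : (∑ k ∈ Finset.Ico (0 + 1) w'.length,
            cnt p (w'.take k) * cnt w (w'.drop k)) % 2 = 0 := by
          rw [Finset.sum_nat_mod]
          have hz : ∀ k ∈ Finset.Ico (0 + 1) w'.length,
              cnt p (w'.take k) * cnt w (w'.drop k) % 2 = 0 := by
            intro k hk
            rw [Finset.mem_Ico] at hk
            have hdrop_ne : w'.drop k ≠ [] := by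
              intro hd
              have hdl := congrArg List.length hd
              rw [List.length_drop, List.length_nil] at hdl
              omega
            have hdrop_len : (w'.drop k).length < L := by
              rw [List.length_drop]
              omega
            have hdvd := IH (w'.drop k).length hdrop_len (w'.drop k) rfl hdrop_ne
              (by rw [List.length_drop]; omega)
            have h2d : 2 ∣ cnt p (w'.take k) * cnt w (w'.drop k) := hdvd.mul_left _
            omega
          rw [Finset.sum_congr rfl hz]
          simp
        omega
      have hprof := h w' hne hlen
      omega
  exact fun w' h1 h2 ↦ main w'.length w' rfl h1 h2

end cnt

/-- For a finite alphabet with `m ≥ 1` symbols and `n ≥ 1`, there is a constant `C`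
such that every word of length at least `C` contains a nonempty contiguous subword `w`
in which every nonempty word of length at most `n` occurs as a subsequence an even
number of times. -/
theorem exists_even_subseq_subword {α : Type*} [Fintype α] (m n : ℕ)
    (hm : 1 ≤ m) (hcard : Fintype.card α = m) (hn : 1 ≤ n) :
    ∃ C : ℕ, ∀ s : List α, C ≤ s.length →
      ∃ w : List α, w ≠ [] ∧ w <:+: s ∧
        ∀ w' : List α, w' ≠ [] → w'.length ≤ n → 2 ∣ subseqCount w w' := by
  classical
  have hfin : Finite {l : List α // l.length ≤ n} := (List.finite_length_le α n).to_subtype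
  set S := ({l : List α // l.length ≤ n} → ZMod 2) with hS
  haveI : Fintype S := Fintype.ofFinite S
  refine ⟨Fintype.card S + 1, fun s hs ↦ ?_⟩
  set F : Fin (Fintype.card S + 1) → S :=
    fun i ↦ fun l ↦ (cnt (s.take i) l.1 : ZMod 2) with hF
  have main : ∀ i j : Fin (Fintype.card S + 1), (i : ℕ) < (j : ℕ) → F i = F j →
      ∃ w : List α, w ≠ [] ∧ w <:+: s ∧
        ∀ w' : List α, w' ≠ [] → w'.length ≤ n → 2 ∣ subseqCount w w' := by
    intro i j hlt hFij
    set p := s.take i with hp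
    set w := (s.drop i).take ((j : ℕ) - i) with hw
    have hjlen : (j : ℕ) ≤ s.length := le_trans (le_of_lt j.isLt) hs
    have hpw : s.take j = p ++ w := by
      rw [hp, hw, ← List.take_add]
      congr 1
      omega
    have hwne : w ≠ [] := by
      intro hnil
      have hlen := congrArg List.length hnil
      rw [hw, List.length_take, List.length_drop, List.length_nil] at hlen
      omega
    refine ⟨w, hwne, ?_, ?_⟩
    · exact (List.take_prefix _ _).isInfix.trans (List.drop_suffix _ _).isInfix
    · have hprof : ∀ w' : List α, w' ≠ [] → w'.length ≤ n →
          cnt (p ++ w) w' % 2 = cnt p w' % 2 := by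
        intro w' _ hlen
        have hthis := congrFun hFij ⟨w', hlen⟩
        rw [hF] at hthis
        simp only at hthis
        rw [hpw, ← hp] at hthis
        exact (ZMod.natCast_eq_natCast_iff _ _ 2).mp hthis.symm
      intro w' hne hlen
      rw [subseqCount_eq_cnt]
      exact even_of_same_profile hprof w' hne hlen
  obtain ⟨i, j, hij, hFij⟩ := Fintype.exists_ne_map_eq_of_card_lt F (by simp)
  rcases lt_or_gt_of_ne (fun hval : (i : ℕ) = (j : ℕ) ↦ hij (Fin.ext hval)) with hlt | hlt
  · exact main i j hlt hFij
  · exact main j i hlt hFij.symm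
end

section
/- Let G be a group generated by finitely many elements g₀, …, g_n (i.e., given g : Fin (n+1) → G whose range generates G), and suppose some a ∈ G has infinite order. Then there exist k ≥ 1 and indices i : Fin k → Fin (n+1) such that the partial products ∏_{j=0}^{N} g(i(j mod k)) are pairwise distinct for distinct N ∈ ℕ; i.e., the map N ↦ ∏_{j=0}^{N} g(i(j mod k)) is injective. -/
private lemma word_exists {G : Type*} [Group G] {n : ℕ} (g : Fin (n + 1) → G)
    (hgen : Subgroup.closure (Set.range g) = ⊤) (a : G)
    (ha : ∀ k : ℤ, k ≠ 0 → a ^ k ≠ 1) :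
    ∃ l : List (Fin (n + 1)), l ≠ [] ∧ ∀ z : ℤ, z ≠ 0 → ((l.map g).prod) ^ z ≠ 1 := by
  by_cases hfin : ∃ i, ∀ z : ℤ, z ≠ 0 → (g i) ^ z ≠ 1
  · obtain ⟨i, hi⟩ := hfin
    exact ⟨[i], by simp, by simpa using hi⟩
  · push_neg at hfin
    -- every generator has finite order, so its inverse is a positive power
    have hinvgen : ∀ i : Fin (n + 1), (g i)⁻¹ ∈ Submonoid.closure (Set.range g) := by
      intro i
      obtain ⟨z, hz, hz1⟩ := hfin i
      have hnat : (g i) ^ z.natAbs = 1 := by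
        rcases Int.natAbs_eq z with h | h
        · rw [h, zpow_natCast] at hz1; exact hz1
        · rw [h, zpow_neg, zpow_natCast, inv_eq_one] at hz1; exact hz1
      have hpos : 1 ≤ z.natAbs := by
        rcases Nat.eq_zero_or_pos z.natAbs with h | h
        · exact absurd (Int.natAbs_eq_zero.mp h) hz
        · exact h
      have hinveq : (g i)⁻¹ = (g i) ^ (z.natAbs - 1) := by
        have h1 : (g i) * (g i) ^ (z.natAbs - 1) = 1 := by
          rw [← pow_succ', show z.natAbs - 1 + 1 = z.natAbs from by omega]
          exact hnat
        exact inv_eq_of_mul_eq_one_right h1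
      rw [hinveq]
      exact pow_mem (Submonoid.subset_closure (Set.mem_range_self i)) _
    have hinv : ∀ x ∈ Submonoid.closure (Set.range g),
        x⁻¹ ∈ Submonoid.closure (Set.range g) := by
      intro x hx
      induction hx using Submonoid.closure_induction with
      | mem y hy => obtain ⟨i, rfl⟩ := hy; exact hinvgen i
      | one => simpa using Submonoid.one_mem _
      | mul x y hx hy ihx ihy => rw [mul_inv_rev]; exact mul_mem ihy ihx
    have haM : a ∈ Submonoid.closure (Set.range g) := by
      have hatop : a ∈ Subgroup.closure (Set.range g) := by rw [hgen]; trivial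
      exact Subgroup.closure_induction
        (fun y hy => Submonoid.subset_closure hy)
        (Submonoid.one_mem _)
        (fun x y _ _ ihx ihy => mul_mem ihx ihy)
        (fun x _ ihx => hinv x ihx) hatop
    obtain ⟨L, hL, hLprod⟩ := Submonoid.exists_list_of_mem_closure haM
    have hidx : ∀ L' : List G, (∀ x ∈ L', x ∈ Set.range g) →
        ∃ l : List (Fin (n + 1)), l.map g = L' := by
      intro L'
      induction L' with
      | nil => exact fun _ => ⟨[], rfl⟩
      | cons x L' ih =>
        intro h
        obtain ⟨i, hi⟩ := h x (by simp)
        obtain ⟨l, hl⟩ := ih fun y hy => h y (by simp [hy])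
        exact ⟨i :: l, by simp [hi, hl]⟩
    obtain ⟨l, hl⟩ := hidx L hL
    refine ⟨l, ?_, ?_⟩
    · rintro rfl
      have : a = 1 := by rw [← hLprod, ← hl]; simp
      exact ha 1 one_ne_zero (by simpa using this)
    · rw [hl, hLprod]; exact ha

/-- If a finitely generated group `G = ⟨g₀, …, g_n⟩` has an element of infinite order,
then there are `k ≥ 1` and indices `i : Fin k → Fin (n+1)` such that the partial
products `∏_{j=0}^{N} g(i(j mod k))` are pairwise distinct, i.e. the corresponding
periodic sequence of generators traces out a non-self-intersecting path. -/
theorem exists_periodic_escape {G : Type*} [Group G] (n : ℕ) (g : Fin (n + 1) → G)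
    (hgen : Subgroup.closure (Set.range g) = ⊤) (a : G)
    (ha : ∀ k : ℤ, k ≠ 0 → a ^ k ≠ 1) :
    ∃ k : ℕ, ∃ hk : 1 ≤ k, ∃ i : Fin k → Fin (n + 1),
      Function.Injective (fun N : ℕ =>
        ((List.range (N + 1)).map
          (fun j => g (i ⟨j % k, Nat.mod_lt j (by omega)⟩))).prod) := by
  classical
  obtain ⟨l0, hl0ne, hl0⟩ := word_exists g hgen a ha
  have hS : ∃ k : ℕ, ∃ l : List (Fin (n + 1)), l.length = k ∧ l ≠ [] ∧
      ∀ z : ℤ, z ≠ 0 → ((l.map g).prod) ^ z ≠ 1 := ⟨l0.length, l0, rfl, hl0ne, hl0⟩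
  obtain ⟨l, hlen, hlne, hl⟩ := Nat.find_spec hS
  set k := Nat.find hS with hkdef
  have hmin : ∀ l' : List (Fin (n + 1)), l' ≠ [] → l'.length < k →
      ∃ z : ℤ, z ≠ 0 ∧ ((l'.map g).prod) ^ z = 1 := by
    intro l' h1 h2
    have h3 := Nat.find_min hS h2
    push_neg at h3
    exact h3 l' rfl h1
  have hk1 : 1 ≤ k := by
    rw [← hlen]
    exact List.length_pos_iff.mpr hlne
  have hk0 : 0 < k := hk1
  refine ⟨k, hk1, fun j => l.get (Fin.cast hlen.symm j), ?_⟩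
  set b := (l.map g).prod with hb
  set F : ℕ → G := fun j =>
    g (l.get (Fin.cast hlen.symm ⟨j % k, Nat.mod_lt j hk0⟩)) with hF
  set P : ℕ → G := fun N => ((List.range (N + 1)).map F).prod with hP
  set p : ℕ → G := fun r => ((l.take (r + 1)).map g).prod with hp
  have hrange : ∀ m, m ≤ k → (List.range m).map F = (l.take m).map g := by
    intro m hm
    induction m with
    | zero => simp
    | succ m ih =>
      rw [List.range_succ, List.map_append, ih (by omega)]
      have hm' : m < l.length := by omega
      have htake : l.take (m + 1) = l.take m ++ [l.get ⟨m, hm'⟩] := by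
        rw [List.take_succ, List.getElem?_eq_getElem hm']
        rfl
      rw [htake, List.map_append]
      congr 1
      have hFm : F m = g (l.get ⟨m, hm'⟩) := by
        simp only [hF]
        congr 1
        apply congrArg
        apply Fin.ext
        simp only [Fin.coe_cast]
        exact Nat.mod_eq_of_lt (by omega)
      simp [hFm]
  have hbk : ((List.range k).map F).prod = b := by
    rw [hrange k le_rfl]
    congr 1
    rw [← hlen, List.take_length]
  have hFper : ∀ j, F (k + j) = F j := by
    intro j
    simp only [hF]
    congr 1
    apply congrArg
    apply Fin.ext
    simp only [Fin.coe_cast]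
    exact Nat.add_mod_left k j
  have key : ∀ q r, r < k → P (k * q + r) = b ^ q * p r := by
    intro q
    induction q with
    | zero =>
      intro r hr
      simp only [hP, hp, Nat.mul_zero, Nat.zero_add, pow_zero, one_mul]
      rw [hrange (r + 1) (by omega)]
    | succ q ih =>
      intro r hr
      have harith : k * (q + 1) + r + 1 = k + (k * q + r + 1) := by ring
      have hcongr : (List.range (k * q + r + 1)).map (F ∘ fun x => k + x) =
          (List.range (k * q + r + 1)).map F := by
        apply List.map_congr_left
        intro x _
        exact hFper x
      simp only [hP] at ih ⊢
      rw [harith, List.range_add, List.map_append, List.prod_append, List.map_map]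
      rw [hcongr, hbk, ih r hr, ← mul_assoc, ← pow_succ']
  have hconj : ∀ (x c : G) (z : ℤ), (x⁻¹ * c * x) ^ z = x⁻¹ * c ^ z * x := by
    intro x c z
    have := conj_zpow (i := z) (a := x⁻¹) (b := c)
    simpa using this
  have main : ∀ q q' r r', r < r' → r' < k → b ^ q * p r = b ^ q' * p r' → False := by
    intro q q' r r' hrr' hr'k heq
    have hrk : r < k := by omega
    have hr'len : r' < l.length := by omega
    set m : ℤ := (q : ℤ) - q' with hm
    have hpr' : p r' = b ^ m * p r := by
      have h1 : p r' = (b ^ q')⁻¹ * (b ^ q * p r) := by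
        rw [heq]; group
      rw [h1, hm]
      rw [← zpow_natCast b q, ← zpow_natCast b q', ← zpow_neg, ← mul_assoc, ← zpow_add]
      congr 2
      ring
    set A := l.take (r + 1) with hA
    set Bm := (l.drop (r + 1)).take (r' - r) with hBm
    set C := l.drop (r' + 1) with hC
    have htake' : l.take (r' + 1) = A ++ Bm := by
      rw [show r' + 1 = (r + 1) + (r' - r) by omega, List.take_add]
    have hsplit : l = A ++ Bm ++ C := by
      rw [← htake', List.take_append_drop]
    have hpA : (A.map g).prod = p r := rfl
    set sB := (Bm.map g).prod with hsB
    set tC := (C.map g).prod with htC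
    have hpr'2 : p r' = p r * sB := by
      simp only [hp]
      rw [htake', List.map_append, List.prod_append]
    have hbdec : b = p r * sB * tC := by
      conv_lhs => rw [hb, hsplit]
      rw [List.map_append, List.map_append, List.prod_append, List.prod_append, hpA]
    have hsBval : sB = (p r)⁻¹ * b ^ m * p r := by
      have h0 : p r * sB = b ^ m * p r := by rw [← hpr'2, hpr']
      have h1 : sB = (p r)⁻¹ * (p r * sB) := by group
      rw [h1, h0]; group
    have hBmlen : Bm.length = r' - r := by
      simp only [hBm, List.length_take, List.length_drop]
      omega
    by_cases hm1 : m = 1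
    · -- middle segment is a shorter word with product conjugate to b
      have hBmne : Bm ≠ [] := List.length_pos_iff.mp (by rw [hBmlen]; omega)
      obtain ⟨z, hz, hz1⟩ := hmin Bm hBmne (by rw [hBmlen]; omega)
      rw [← hsB] at hz1
      rw [hsBval, hm1, zpow_one, hconj] at hz1
      have hbz : b ^ z = 1 := by
        have h2 : b ^ z = (p r) * ((p r)⁻¹ * b ^ z * p r) * (p r)⁻¹ := by group
        rw [h2, hz1]; group
      exact hl z hz hbz
    · -- removing the middle segment gives a shorter word with product b^(1-m)
      have hAClen : (A ++ C).length < k := by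
        simp only [List.length_append, hA, hC, List.length_take, List.length_drop]
        omega
      have hACne : (A ++ C) ≠ [] := List.length_pos_iff.mp (by
        simp only [List.length_append, hA, hC, List.length_take, List.length_drop]
        omega)
      have hprod : ((A ++ C).map g).prod = p r * tC := by
        rw [List.map_append, List.prod_append, hpA]
      have h1 : b = b ^ m * (p r * tC) := by
        conv_lhs => rw [hbdec]
        rw [hsBval]; group
      have h2 := congrArg (fun x => (b ^ m)⁻¹ * x) h1
      simp only [inv_mul_cancel_left] at h2
      -- h2 : (b ^ m)⁻¹ * b = p r * tC
      have hval : p r * tC = b ^ (1 - m) := by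
        rw [← h2]; group
      obtain ⟨z, hz, hz1⟩ := hmin (A ++ C) hACne hAClen
      rw [hprod, hval, ← zpow_mul] at hz1
      refine hl ((1 - m) * z) ?_ hz1
      intro h
      rcases mul_eq_zero.mp h with h | h
      · exact hm1 (by omega)
      · exact hz h
  intro N M hNM
  have hPNM : P N = P M := hNM
  have hN : P N = b ^ (N / k) * p (N % k) := by
    have := key (N / k) (N % k) (Nat.mod_lt _ hk0)
    rwa [Nat.div_add_mod] at this
  have hM : P M = b ^ (M / k) * p (M % k) := by
    have := key (M / k) (M % k) (Nat.mod_lt _ hk0)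
    rwa [Nat.div_add_mod] at this
  rw [hN, hM] at hPNM
  rcases lt_trichotomy (N % k) (M % k) with h | h | h
  · exact absurd hPNM (fun heq => main _ _ _ _ h (Nat.mod_lt _ hk0) heq)
  · rw [h] at hPNM
    have hbq : b ^ (N / k) = b ^ (M / k) := mul_right_cancel hPNM
    have hqq : N / k = M / k := by
      by_contra hne
      have hone : b ^ (((N / k : ℕ) : ℤ) - ((M / k : ℕ) : ℤ)) = 1 := by
        rw [zpow_sub, zpow_natCast, zpow_natCast, hbq]
        group
      exact hl _ (by omega) hone
    have h1 := Nat.div_add_mod N k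
    have h2 := Nat.div_add_mod M k
    rw [hqq, h] at h1
    omega
  · exact absurd hPNM.symm (fun heq => main _ _ _ _ h (Nat.mod_lt _ hk0) heq)
end

section
/- Let G be a group, m ≥ 1, and g : Fin m → G such that the range of g generates G and is closed under inverses. Suppose that for every computable function s : ℕ → Fin m there exist natural numbers N₁ < N₂ with ∏_{j=0}^{N₁−1} g(s j) = ∏_{j=0}^{N₂−1} g(s j) (the path of partial products self-intersects). Then every element of G has finite order (G is a Burnside group). -/
/-!
Write an element `a` as a word `w` in the generators and run the computable periodic path
`w w w …`. Its partial product after `q * |w| + i` letters is `a ^ q * P i`, where `P i` is the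
product of the first `i` letters of `w`, so a self-intersection gives `a ^ q₁ * P i = a ^ q₂ * P j`
with `(q₁, i) ≠ (q₂, j)` and `i ≤ j < |w|`. If `q₁ = q₂`, cutting the letters `i, …, j - 1` out
of `w` leaves a shorter word for `a`. Otherwise those letters form a shorter word whose product
is conjugate to `a ^ (q₁ - q₂)`. Either way strong induction on the length of `w` shows that `a`
has finite order. Words without inverse letters suffice: by the one-letter case every generator
has finite order, so its inverse is a positive power of it.
-/

def SelfIntersects {M : Type*} [Monoid M] (f : ℕ → M) : Prop :=
  ∃ N₁ N₂ : ℕ, N₁ < N₂ ∧ ((List.range N₁).map f).prod = ((List.range N₂).map f).prod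

/-- `w w w …`; the default `d` is only used when `w = []`. -/
def List.cyclicSeq {α : Type*} (w : List α) (d : α) (j : ℕ) : α :=
  w.getD (j % w.length) d

theorem List.comp_cyclicSeq {α β : Type*} (f : α → β) (w : List α) (d : α) :
    f ∘ w.cyclicSeq d = (w.map f).cyclicSeq (f d) := by
  funext j
  simp [List.cyclicSeq]

theorem List.computable_cyclicSeq {α : Type*} [Primcodable α] (w : List α) (d : α) :
    Computable (w.cyclicSeq d) :=
  ((Primrec.list_getD d).comp (Primrec.const w)
    (Primrec.nat_mod.comp Primrec.id (Primrec.const _))).to_comp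

theorem List.map_range_cyclicSeq {α : Type*} (w : List α) (d : α) {r : ℕ} (hr : r ≤ w.length) :
    (List.range r).map (w.cyclicSeq d) = w.take r := by
  refine List.ext_getElem (by simp [hr]) fun k hk _ => ?_
  have hk : k < w.length := by simp at hk; omega
  simp [List.cyclicSeq, Nat.mod_eq_of_lt hk, List.getElem?_eq_getElem hk]

theorem List.prod_map_range_mul_add_of_periodic {M : Type*} [Monoid M] {f : ℕ → M} {L : ℕ}
    (hf : Function.Periodic f L) (q r : ℕ) :
    ((List.range (L * q + r)).map f).prod =
      ((List.range L).map f).prod ^ q * ((List.range r).map f).prod := by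
  induction q with
  | zero => simp
  | succ q ih =>
    have hshift : (fun j => f (L + j)) = f := funext fun j => by rw [add_comm, hf]
    rw [mul_add_one, add_comm (L * q), add_assoc, List.range_add, List.map_append, List.map_map,
      Function.comp_def, hshift, List.prod_append, ih, pow_succ', mul_assoc]

theorem List.prod_map_range_cyclicSeq {M : Type*} [Monoid M] {w : List M} (hw : w ≠ []) (d : M)
    (N : ℕ) :
    ((List.range N).map (w.cyclicSeq d)).prod =
      w.prod ^ (N / w.length) * (w.take (N % w.length)).prod := by
  have hper : Function.Periodic (w.cyclicSeq d) w.length := fun j => by simp [List.cyclicSeq]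
  conv_lhs => rw [← Nat.div_add_mod N w.length]
  rw [List.prod_map_range_mul_add_of_periodic hper, List.map_range_cyclicSeq _ _ le_rfl,
    List.map_range_cyclicSeq _ _ (Nat.mod_lt _ (List.length_pos_iff.mpr hw)).le, List.take_length]

theorem SelfIntersects.exists_pow_mul_prod_take_eq {M : Type*} [Monoid M] {w : List M}
    (hw : w ≠ []) {d : M} (h : SelfIntersects (w.cyclicSeq d)) :
    ∃ q₁ q₂ i j : ℕ, i < w.length ∧ j < w.length ∧ (q₁, i) ≠ (q₂, j) ∧
      w.prod ^ q₁ * (w.take i).prod = w.prod ^ q₂ * (w.take j).prod := by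
  obtain ⟨N₁, N₂, hlt, heq⟩ := h
  have hL : 0 < w.length := List.length_pos_iff.mpr hw
  refine ⟨N₁ / w.length, N₂ / w.length, N₁ % w.length, N₂ % w.length, Nat.mod_lt _ hL,
    Nat.mod_lt _ hL, fun hqr => hlt.ne ?_, by
      rwa [List.prod_map_range_cyclicSeq hw, List.prod_map_range_cyclicSeq hw] at heq⟩
  simp only [Prod.mk.injEq] at hqr
  rw [← Nat.div_add_mod N₁ w.length, ← Nat.div_add_mod N₂ w.length, hqr.1, hqr.2]

theorem IsOfFinOrder.of_zpow {G : Type*} [Group G] {a : G} {k : ℤ} (h : IsOfFinOrder (a ^ k))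
    (hk : k ≠ 0) : IsOfFinOrder a := by
  obtain ⟨n, hn, hpow⟩ := isOfFinOrder_iff_zpow_eq_one.mp h
  exact isOfFinOrder_iff_zpow_eq_one.mpr ⟨k * n, mul_ne_zero hk hn, by rwa [zpow_mul]⟩

section

variable {G : Type*} [Group G]

theorem List.prod_take_mul_prod_drop_take (w : List G) {i j : ℕ} (hij : i ≤ j) :
    (w.take i).prod * ((w.take j).drop i).prod = (w.take j).prod := by
  rw [← List.prod_take_mul_prod_drop (w.take j) i, List.take_take, min_eq_left hij]

theorem isOfFinOrder_prod_of_pow_mul_prod_take_eq (w : List G)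
    (ih : ∀ v : List G, v.length < w.length → v ⊆ w → IsOfFinOrder v.prod)
    {q₁ q₂ i j : ℕ} (hi : i < w.length) (hj : j < w.length) (hne : (q₁, i) ≠ (q₂, j))
    (h : w.prod ^ q₁ * (w.take i).prod = w.prod ^ q₂ * (w.take j).prod) :
    IsOfFinOrder w.prod := by
  wlog hij : i ≤ j generalizing q₁ q₂ i j
  · exact this hj hi hne.symm h.symm (le_of_not_ge hij)
  rcases eq_or_ne q₁ q₂ with rfl | hq
  · have hlt : i < j := lt_of_le_of_ne hij fun hij => hne (by rw [hij])
    have hcut : (w.take i ++ w.drop j).prod = w.prod := by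
      rw [List.prod_append, mul_left_cancel h, List.prod_take_mul_prod_drop]
    rw [← hcut]
    exact ih _ (by simp; omega)
      (List.append_subset.mpr ⟨List.take_subset _ _, List.drop_subset _ _⟩)
  · rw [← List.prod_take_mul_prod_drop_take w hij] at h
    set u := (w.take i).prod
    set v := (w.take j).drop i
    have hconj : IsConj (w.prod ^ ((q₁ : ℤ) - q₂)) v.prod := by
      refine isConj_iff.mpr ⟨u⁻¹, ?_⟩
      have hprod : v.prod = u⁻¹ * ((w.prod ^ q₂)⁻¹ * (w.prod ^ q₁ * u)) := by rw [h]; group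
      rw [hprod]
      group
    have hv : IsOfFinOrder v.prod :=
      ih v (by simp [v]; omega) fun x hx => List.mem_of_mem_take (List.mem_of_mem_drop hx)
    exact (hconj.symm.isOfFinOrder hv).of_zpow (sub_ne_zero.mpr (by exact_mod_cast hq))

theorem isOfFinOrder_prod_of_forall_selfIntersects {S : Set G}
    (hS : ∀ w : List G, w ≠ [] → (∀ x ∈ w, x ∈ S) → ∃ d, SelfIntersects (w.cyclicSeq d))
    (w : List G) (hw : ∀ x ∈ w, x ∈ S) : IsOfFinOrder w.prod := by
  rcases eq_or_ne w [] with rfl | hne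
  · simp
  obtain ⟨d, hd⟩ := hS w hne hw
  obtain ⟨q₁, q₂, i, j, hi, hj, hne, h⟩ := hd.exists_pow_mul_prod_take_eq hne
  refine isOfFinOrder_prod_of_pow_mul_prod_take_eq w (fun v _ hvw => ?_) hi hj hne h
  exact isOfFinOrder_prod_of_forall_selfIntersects hS v fun x hx => hw x (hvw hx)
termination_by w.length

end

theorem burnside_of_inescapable_general {G : Type*} [Group G] (m : ℕ)
    (g : Fin m → G) (hgen : Subgroup.closure (Set.range g) = ⊤)
    (hself : ∀ s : ℕ → Fin m, Computable s →
      ∃ N₁ N₂ : ℕ, N₁ < N₂ ∧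
        ((List.range N₁).map (fun j => g (s j))).prod =
        ((List.range N₂).map (fun j => g (s j))).prod) :
    ∀ a : G, ∃ k : ℤ, 1 ≤ k ∧ a ^ k = 1 := by
  have hwords : ∀ w : List G, (∀ x ∈ w, x ∈ Set.range g) → IsOfFinOrder w.prod := by
    refine isOfFinOrder_prod_of_forall_selfIntersects fun w hne hw => ?_
    obtain ⟨ws, rfl⟩ : w ∈ Set.range (List.map g) := by rwa [Set.range_list_map]
    obtain ⟨i₀, -⟩ := List.exists_mem_of_ne_nil ws (by rintro rfl; simp at hne)
    exact ⟨g i₀, List.comp_cyclicSeq g ws i₀ ▸ hself _ (ws.computable_cyclicSeq i₀)⟩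
  have hgens : ∀ x ∈ Set.range g, IsOfFinOrder x := by
    rintro _ ⟨i, rfl⟩
    simpa using hwords [g i] (by simp)
  intro a
  have ha : a ∈ Submonoid.closure (Set.range g) := by
    rw [← Subgroup.closure_toSubmonoid_of_isOfFinOrder hgens, hgen]
    exact Subgroup.mem_top a
  obtain ⟨w, hw, rfl⟩ := Submonoid.exists_list_of_mem_closure ha
  obtain ⟨n, hn, hpow⟩ := (hwords w hw).exists_pow_eq_one
  exact ⟨n, by exact_mod_cast hn, by rwa [zpow_natCast]⟩

/-- If every computable sequence of generators of `G` traces out a self-intersecting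
path of partial products, then every element of `G` has finite order
(an inescapable group is a Burnside group). -/
theorem burnside_of_inescapable {G : Type*} [Group G] (m : ℕ) (hm : 1 ≤ m)
    (g : Fin m → G) (hgen : Subgroup.closure (Set.range g) = ⊤)
    (hinv : ∀ i : Fin m, ∃ i' : Fin m, g i' = (g i)⁻¹)
    (hself : ∀ s : ℕ → Fin m, Computable s →
      ∃ N₁ N₂ : ℕ, N₁ < N₂ ∧
        ((List.range N₁).map (fun j => g (s j))).prod =
        ((List.range N₂).map (fun j => g (s j))).prod) :
    ∀ a : G, ∃ k : ℤ, 1 ≤ k ∧ a ^ k = 1 :=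
  burnside_of_inescapable_general m g hgen hself
end

section
/- Let d ≥ 1, let A = F₂⟨x₁, …, x_d⟩ be the free algebra over F₂ in d noncommuting indeterminates, and let I be a two-sided ideal of A generated by a set of homogeneous polynomials. Let M > N ≥ 0, let i₁, …, i_M and j₁, …, j_N be indices in {1, …, d}, and suppose the monomial x_{i₁}x_{i₂}⋯x_{i_M} does not lie in I. Then (1+x_{i₁})(1+x_{i₂})⋯(1+x_{i_M}) − (1+x_{j₁})(1+x_{j₂})⋯(1+x_{j_N}) does not lie in I; in particular, the images of these two products in the quotient algebra A/I are distinct. -/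
/-- `p` is a monomial of degree `n` in the free algebra `F₂⟨x₁, …, x_d⟩`:
a product of `n` indeterminates. -/
def IsMonomialOfDegree {d : ℕ} (n : ℕ) (p : FreeAlgebra (ZMod 2) (Fin d)) : Prop :=
  ∃ f : Fin n → Fin d,
    p = (List.ofFn fun i : Fin n => FreeAlgebra.ι (ZMod 2) (f i)).prod

/-- `p` is homogeneous of degree `n`: an `F₂`-linear combination of monomials of
degree `n`. -/
def IsHomogeneousOfDegree {d : ℕ} (n : ℕ) (p : FreeAlgebra (ZMod 2) (Fin d)) : Prop :=
  p ∈ Submodule.span (ZMod 2) {q : FreeAlgebra (ZMod 2) (Fin d) | IsMonomialOfDegree n q}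

/-!
The free algebra is graded by word length, and a two-sided ideal generated by homogeneous
elements is stable under taking homogeneous components. The degree-`M` component of
`(1+x_{i₁})⋯(1+x_{i_M}) − (1+x_{j₁})⋯(1+x_{j_N})` is the monomial `x_{i₁}⋯x_{i_M}`, because the
second product has degree `N < M`; so if the difference were in `I`, so would be the monomial.
-/

open DirectSum

namespace TwoSidedIdeal

variable {ι A σ : Type*} [DecidableEq ι] [AddMonoid ι] [Ring A] [SetLike σ A]
  [AddSubmonoidClass σ A] (𝒜 : ι → σ) [GradedRing 𝒜]

theorem proj_mem_of_mem_graded {I : TwoSidedIdeal A} {i : ι} {x : A} (hxI : x ∈ I)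
    (hx : x ∈ 𝒜 i) (n : ι) : GradedRing.proj 𝒜 n x ∈ I := by
  rw [GradedRing.proj_apply]
  by_cases h : i = n
  · rwa [← h, decompose_of_mem_same 𝒜 hx]
  · rw [decompose_of_mem_ne 𝒜 hx h]
    exact I.zero_mem

theorem proj_mem_span {F : Set A} (hF : ∀ f ∈ F, SetLike.IsHomogeneousElem 𝒜 f) {z : A}
    (hz : z ∈ span F) (n : ι) : GradedRing.proj 𝒜 n z ∈ span F := by
  rw [mem_span_iff_mem_addSubgroup_closure] at hz
  induction hz using AddSubgroup.closure_induction with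
  | mem x hx =>
    obtain ⟨_, ⟨a, -, f, hf, rfl⟩, b, -, rfl⟩ := hx
    obtain ⟨m, hm⟩ := hF f hf
    induction a using DirectSum.Decomposition.inductionOn 𝒜 with
    | zero => simp
    | add a a' ha ha' => simp only [add_mul, map_add] at ha ha' ⊢; exact (span F).add_mem ha ha'
    | homogeneous a =>
      induction b using DirectSum.Decomposition.inductionOn 𝒜 with
      | zero => simp
      | add b b' hb hb' => simp only [mul_add, map_add] at hb hb' ⊢; exact (span F).add_mem hb hb'
      | homogeneous b =>
        exact proj_mem_of_mem_graded 𝒜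
          ((span F).mul_mem_right _ _ ((span F).mul_mem_left _ _ (subset_span hf)))
          (SetLike.mul_mem_graded (SetLike.mul_mem_graded a.2 hm) b.2) n
  | zero => simp
  | add x y _ _ hx hy => rw [map_add]; exact (span F).add_mem hx hy
  | neg x _ hx => rw [map_neg]; exact (span F).neg_mem hx

end TwoSidedIdeal

namespace FreeAlgebra

variable (R X : Type*) [CommSemiring R]

abbrev grading : ℕ → Submodule R (FreeAlgebra R X) :=
  (Submodule.span R (Set.range (ι R)) ^ ·)

variable {X} in
theorem ι_mem_grading_one (x : X) : ι R x ∈ grading R X 1 := by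
  simpa using Submodule.subset_span (Set.mem_range_self x)

def toDirectSum : FreeAlgebra R X →ₐ[R] ⨁ n, grading R X n :=
  lift R fun x => DirectSum.of (fun n => grading R X n) 1 ⟨ι R x, ι_mem_grading_one R x⟩

instance gradedAlgebra : GradedAlgebra (grading R X) :=
  GradedAlgebra.ofAlgHom _ (toDirectSum R X)
    (by ext x; simp [toDirectSum])
    fun i x => by
      obtain ⟨x, hx⟩ := x
      induction hx using Submodule.pow_induction_on_left' with
      | algebraMap r => rw [AlgHom.commutes, DirectSum.algebraMap_apply]; rfl
      | add x y i hx hy ihx ihy => rw [map_add, ihx, ihy, ← map_add]; rfl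
      | mem_mul m hm i x hx ih =>
        induction hm using Submodule.span_induction with
        | mem m hm =>
          obtain ⟨a, rfl⟩ := hm
          rw [map_mul, ih, toDirectSum, lift_ι_apply, DirectSum.of_mul_of]
          exact DirectSum.of_eq_of_gradedMonoid_eq (Sigma.subtype_ext (add_comm _ _) rfl)
        | zero => simp only [zero_mul, map_zero]; exact (map_zero _).symm
        | add m m' hm hm' ihm ihm' =>
          simp only [add_mul, map_add] at ihm ihm' ⊢
          rw [ihm, ihm', ← map_add]
          rfl
        | smul r m hm ihm =>
          simp only [smul_mul_assoc, map_smul] at ihm ⊢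
          rw [ihm, ← DirectSum.of_smul]
          rfl

variable {R X}

theorem proj_prod_one_add_ι {m : ℕ} (i : Fin m → X) {n : ℕ} (hmn : m ≤ n) :
    GradedRing.proj (grading R X) n (List.ofFn fun k => 1 + ι R (i k)).prod =
      if n = m then (List.ofFn fun k => ι R (i k)).prod else 0 := by
  induction m generalizing n with
  | zero =>
    rw [List.ofFn_zero, List.prod_nil, GradedRing.proj_apply]
    split_ifs with h
    · rw [h, decompose_of_mem_same _ SetLike.GradedOne.one_mem]; rfl
    · exact decompose_of_mem_ne _ SetLike.GradedOne.one_mem (Ne.symm h)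
  | succ m ih =>
    rw [List.ofFn_succ, List.prod_cons, add_mul, one_mul, map_add, GradedRing.proj_apply,
      GradedRing.proj_apply, coe_decompose_mul_of_left_mem _ n (ι_mem_grading_one R (i 0)),
      if_pos (by omega), ← GradedRing.proj_apply, ← GradedRing.proj_apply,
      ih _ (by omega), ih _ (by omega), if_neg (by omega), zero_add, List.ofFn_succ,
      List.prod_cons, mul_ite, mul_zero]
    exact if_congr (by omega) rfl rfl

end FreeAlgebra

theorem IsHomogeneousOfDegree.mem_grading {d n : ℕ} {p : FreeAlgebra (ZMod 2) (Fin d)}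
    (hp : IsHomogeneousOfDegree n p) : p ∈ FreeAlgebra.grading (ZMod 2) (Fin d) n := by
  refine Submodule.span_le.2 ?_ hp
  rintro _ ⟨f, rfl⟩
  simpa using SetLike.list_prod_ofFn_mem_graded (fun _ => 1) _
    fun k => FreeAlgebra.ι_mem_grading_one (ZMod 2) (f k)

theorem prod_one_add_sub_not_mem_general {d : ℕ}
    (F : Set (FreeAlgebra (ZMod 2) (Fin d)))
    (hF : ∀ p ∈ F, ∃ n : ℕ, IsHomogeneousOfDegree n p)
    (M N : ℕ) (hMN : M > N) (i : Fin M → Fin d) (j : Fin N → Fin d)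
    (hmono : (List.ofFn fun k : Fin M => FreeAlgebra.ι (ZMod 2) (i k)).prod ∉
      TwoSidedIdeal.span F) :
    (List.ofFn fun k : Fin M => 1 + FreeAlgebra.ι (ZMod 2) (i k)).prod -
        (List.ofFn fun k : Fin N => 1 + FreeAlgebra.ι (ZMod 2) (j k)).prod ∉
      TwoSidedIdeal.span F := by
  intro h
  have hF' : ∀ p ∈ F, SetLike.IsHomogeneousElem (FreeAlgebra.grading (ZMod 2) (Fin d)) p :=
    fun p hp => (hF p hp).imp fun _ => IsHomogeneousOfDegree.mem_grading
  have hM := TwoSidedIdeal.proj_mem_span _ hF' h M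
  rw [map_sub, FreeAlgebra.proj_prod_one_add_ι i le_rfl, FreeAlgebra.proj_prod_one_add_ι j hMN.le,
    if_pos rfl, if_neg hMN.ne', sub_zero] at hM
  exact hmono hM

/-- Let `I` be a two-sided ideal of `F₂⟨x₁, …, x_d⟩` generated by homogeneous
polynomials, `M > N`, and suppose the monomial `x_{i₁}⋯x_{i_M}` does not lie in `I`.
Then `(1+x_{i₁})⋯(1+x_{i_M}) − (1+x_{j₁})⋯(1+x_{j_N})` does not lie in `I`; in
particular the two products are distinct in the quotient. -/
theorem prod_one_add_sub_not_mem {d : ℕ} (hd : 1 ≤ d)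
    (F : Set (FreeAlgebra (ZMod 2) (Fin d)))
    (hF : ∀ p ∈ F, ∃ n : ℕ, IsHomogeneousOfDegree n p)
    (M N : ℕ) (hMN : M > N) (i : Fin M → Fin d) (j : Fin N → Fin d)
    (hmono : (List.ofFn fun k : Fin M => FreeAlgebra.ι (ZMod 2) (i k)).prod ∉
      TwoSidedIdeal.span F) :
    (List.ofFn fun k : Fin M => 1 + FreeAlgebra.ι (ZMod 2) (i k)).prod -
        (List.ofFn fun k : Fin N => 1 + FreeAlgebra.ι (ZMod 2) (j k)).prod ∉
      TwoSidedIdeal.span F :=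
  prod_one_add_sub_not_mem_general F hF M N hMN i j hmono
end

section
/- Let G be an infinite group and S ⊆ G a finite generating set closed under inverses, equipped with a fixed linear order on S. Then there exists an infinite set R of super-reduced words over S such that: (1) R is closed under taking prefixes; (2) distinct words in R represent distinct elements of G (the evaluation map from R to G sending a word to the product of its letters is injective); and (3) the lexicographic order restricted to R is a well-order in which every element has only finitely many predecessors (i.e., it is order-isomorphic to ℕ). -/
/-
A word over `S` of minimal length among the words with the same product is super-reduced:
deleting a nonempty subword with trivial product would shorten it. Since a finite submonoid of a
group is a subgroup, the monoid generated by `S` is the whole infinite group `G`, so such minimal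
words, and hence super-reduced words, exist in every length. Super-reduced words over the finite
alphabet `S` form a prefix-closed tree, so by Kőnig's lemma it has an infinite branch
`b 0 <+: b 1 <+: ⋯` with `(b n).length = n`. Its words are the required `R`: distinct prefixes of
one super-reduced word have distinct products, and along a chain of prefixes the lexicographic
order is the order of the lengths.
-/

/-- A list of group elements is super-reduced if no nonempty contiguous subproduct
equals the identity: for all `i ≤ j < |w|`, the product of the entries in
positions `i, …, j` is not `1`. -/
def SuperReduced {G : Type*} [Group G] (w : List G) : Prop :=
  ∀ i j : ℕ, i ≤ j → j < w.length → ((w.drop i).take (j + 1 - i)).prod ≠ 1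

section SuperReduced

variable {G : Type*} [Group G]

theorem superReduced_iff_forall_infix {w : List G} :
    SuperReduced w ↔ ∀ v, v <:+: w → v ≠ [] → v.prod ≠ 1 := by
  constructor
  · rintro hw v ⟨s, t, rfl⟩ hv
    have hvlen : 0 < v.length := List.length_pos_iff.2 hv
    have := hw s.length (s.length + v.length - 1) (by omega)
      (by rw [List.length_append, List.length_append]; omega)
    simpa [show s.length + v.length - 1 + 1 - s.length = v.length by omega] using this
  · intro h i j hij hj
    refine h _ ((List.take_prefix _ _).isInfix.trans (List.drop_suffix _ _).isInfix) ?_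
    rw [← List.length_pos_iff, List.length_take, List.length_drop]
    omega

theorem SuperReduced.of_infix {v w : List G} (hw : SuperReduced w) (h : v <:+: w) :
    SuperReduced v :=
  superReduced_iff_forall_infix.2 fun u hu ↦ superReduced_iff_forall_infix.1 hw u (hu.trans h)

theorem SuperReduced.injOn_prod_take {w : List G} (hw : SuperReduced w) :
    Set.InjOn (fun n ↦ (w.take n).prod) (Set.Iic w.length) := by
  suffices ∀ m n, m ≤ n → n ≤ w.length → (w.take m).prod = (w.take n).prod → m = n by
    intro m hm n hn h
    rcases le_total m n with hmn | hnm
    exacts [this m n hmn hn h, (this n m hnm hm h.symm).symm]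
  intro m n hmn hn h
  set v := (w.take n).drop m
  have hsplit : w.take m ++ v = w.take n := by
    rw [← List.take_append_drop m (w.take n), List.take_take, min_eq_left hmn]
  have hv : v.prod = 1 := by
    rwa [← hsplit, List.prod_append, left_eq_mul] at h
  have hinfix : v <:+: w := (List.drop_suffix _ _).isInfix.trans (List.take_prefix _ _).isInfix
  by_contra hne
  refine superReduced_iff_forall_infix.1 hw v hinfix ?_ hv
  rw [← List.length_pos_iff, List.length_drop, List.length_take]
  omega

end SuperReduced

section Words

variable {G : Type*} [Group G] {S : Set G}

def IsGeodesicWord (w : List S) : Prop :=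
  ∀ u : List S, (u.map Subtype.val).prod = (w.map Subtype.val).prod → w.length ≤ u.length

theorem IsGeodesicWord.superReduced {w : List S} (hw : IsGeodesicWord w) :
    SuperReduced (w.map Subtype.val) := by
  rw [superReduced_iff_forall_infix]
  rintro _ ⟨_, _, hsplit⟩ hv hone
  obtain ⟨l, c, rfl, hl, rfl⟩ := List.map_eq_append_iff.1 hsplit.symm
  obtain ⟨a, v, rfl, rfl, rfl⟩ := List.map_eq_append_iff.1 hl
  have hshorter := hw (a ++ c) (by simp only [List.map_append, List.prod_append, hone, mul_one])
  simp only [List.length_append] at hshorter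
  simp only [ne_eq, List.map_eq_nil_iff, ← List.length_pos_iff] at hv
  omega

theorem Submonoid.infinite_closure_of_subgroupClosure_eq_top [Infinite G]
    (hS : Subgroup.closure S = ⊤) : (Submonoid.closure S : Set G).Infinite := by
  intro hfin
  have hord : ∀ x ∈ S, IsOfFinOrder x := fun x hx ↦
    finite_powers.1 (hfin.subset (Submonoid.powers_le.2 (Submonoid.subset_closure hx)))
  have htop : Submonoid.closure S = ⊤ := by
    rw [← Subgroup.closure_toSubmonoid_of_isOfFinOrder hord, hS, Subgroup.top_toSubmonoid]
  exact Set.infinite_univ (by rwa [htop, Submonoid.coe_top] at hfin)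

theorem exists_isGeodesicWord_le_length (hSfin : S.Finite)
    (hinf : (Submonoid.closure S : Set G).Infinite) (n : ℕ) :
    ∃ w : List S, IsGeodesicWord w ∧ n ≤ w.length := by
  have := hSfin.to_subtype
  set eval : List S → G := fun u ↦ (u.map Subtype.val).prod
  have hrange : Set.range eval = Submonoid.closure S := by
    rw [Submonoid.closure_eq_mrange, MonoidHom.coe_mrange]
    exact congrArg Set.range (funext fun u ↦ (FreeMonoid.lift_apply _ u).symm)
  have hball : (eval '' {u | u.length ≤ n}).Finite := (List.finite_length_le S n).image eval
  obtain ⟨g, ⟨u, rfl⟩, hg⟩ := ((hrange ▸ hinf).sdiff hball).nonempty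
  obtain ⟨w, hw, hmin⟩ := (measure List.length).wf.has_min {u' | eval u' = eval u} ⟨u, rfl⟩
  refine ⟨w, fun u' hu' ↦ not_lt.1 (hmin u' (hu'.trans hw)), ?_⟩
  by_contra! hlt
  exact hg ⟨w, hlt.le, hw⟩

theorem exists_superReduced_of_length_eq (hSfin : S.Finite)
    (hinf : (Submonoid.closure S : Set G).Infinite) (n : ℕ) :
    ∃ w : List S, SuperReduced (w.map Subtype.val) ∧ w.length = n := by
  obtain ⟨w, hw, hn⟩ := exists_isGeodesicWord_le_length hSfin hinf n
  exact ⟨w.take n, hw.superReduced.of_infix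
      ((List.take_prefix n w).map Subtype.val).isInfix, by simpa using hn⟩

end Words

namespace List

variable {α : Type*}

theorem exists_seq_take_eq_of_forall_length_eq [Finite α] {T : Set (List α)}
    (hT : ∀ w ∈ T, ∀ n, w.take n ∈ T) (hlen : ∀ n, ∃ w ∈ T, w.length = n) :
    ∃ b : ℕ → List α, (∀ n, b n ∈ T ∧ (b n).length = n) ∧
      ∀ m n, m ≤ n → (b n).take m = b m := by
  let level (n : ℕ) := {w : List α // w ∈ T ∧ w.length = n}
  have (n : ℕ) : Finite (level n) :=
    ((List.finite_length_eq α n).subset fun _ hw ↦ hw.2).to_subtype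
  have (n : ℕ) : Nonempty (level n) := let ⟨w, hw⟩ := hlen n; ⟨⟨w, hw⟩⟩
  obtain ⟨f, hf⟩ := exists_seq_forall_proj_of_forall_finite (α := level)
    (fun {m _} hmn w ↦ ⟨w.1.take m, hT _ w.2.1 m, by simp [w.2.2, hmn]⟩)
    (fun _ w ↦ Subtype.ext (List.take_of_length_le w.2.2.le))
    (fun _ _ _ hij _ w ↦ Subtype.ext (by simp [List.take_take, min_eq_left hij]))
    (fun _ _ ↦ Set.toFinite _)
  exact ⟨fun n ↦ (f n).1, fun n ↦ (f n).2, fun m n hmn ↦ congrArg Subtype.val (hf hmn)⟩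

variable {b : ℕ → List α}

theorem mem_range_of_prefix_of_take_eq (htake : ∀ m n, m ≤ n → (b n).take m = b m)
    (hlen : ∀ n, (b n).length = n) {v : List α} {n : ℕ} (hv : v <+: b n) : v ∈ Set.range b := by
  have hle : v.length ≤ n := hlen n ▸ hv.length_le
  exact ⟨v.length, by rw [← htake _ n hle, ← List.prefix_iff_eq_take.1 hv]⟩

theorem lex_of_take_eq (r : α → α → Prop) (htake : ∀ m n, m ≤ n → (b n).take m = b m)
    (hlen : ∀ n, (b n).length = n) {m n : ℕ} (hmn : m < n) : List.Lex r (b m) (b n) := by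
  obtain ⟨a, t, hdrop⟩ := List.exists_cons_of_ne_nil (l := (b n).drop m) <| by
    rw [← List.length_pos_iff, List.length_drop, hlen]
    omega
  rw [← List.take_append_drop m (b n), htake m n hmn.le, hdrop]
  simpa using List.Lex.append_left r (List.Lex.nil (a := a) (l := t)) (b m)

theorem nonempty_relIso_range_lex (r : α → α → Prop) [Std.Asymm r]
    (htake : ∀ m n, m ≤ n → (b n).take m = b m) (hlen : ∀ n, (b n).length = n) :
    Nonempty ((fun v w : Set.range b ↦ List.Lex r (v : List α) w) ≃r
      ((· < ·) : ℕ → ℕ → Prop)) := by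
  have : Std.Asymm (fun v w : Set.range b ↦ List.Lex r (v : List α) w) :=
    ⟨fun _ _ h h' ↦ Std.Asymm.asymm _ _ h h'⟩
  let e := RelEmbedding.ofMonotone (r := ((· < ·) : ℕ → ℕ → Prop))
    (s := fun v w : Set.range b ↦ List.Lex r (v : List α) w) (Set.rangeFactorization b)
    (fun _ _ ↦ lex_of_take_eq r htake hlen)
  exact ⟨(RelIso.ofSurjective e Set.rangeFactorization_surjective).symm⟩

end List

theorem injOn_prod_map_range_of_take_eq {α G : Type*} [Group G] (f : α → G) {b : ℕ → List α}
    (hsr : ∀ n, SuperReduced ((b n).map f)) (htake : ∀ m n, m ≤ n → (b n).take m = b m)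
    (hlen : ∀ n, (b n).length = n) :
    Set.InjOn (fun w ↦ (w.map f).prod) (Set.range b) := by
  rintro _ ⟨m, rfl⟩ _ ⟨n, rfl⟩ h
  set k := max m n
  have hpre (i : ℕ) (hi : i ≤ k) : (b i).map f = ((b k).map f).take i := by
    rw [← List.map_take, htake i k hi]
  have hmem (i : ℕ) (hi : i ≤ k) : i ∈ Set.Iic ((b k).map f).length := by
    rw [Set.mem_Iic, List.length_map, hlen]
    exact hi
  have hmn : m = n := (hsr k).injOn_prod_take (hmem m (le_max_left m n))
    (hmem n (le_max_right m n)) <| by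
      simpa only [hpre m (le_max_left m n), hpre n (le_max_right m n)] using h
  rw [hmn]

theorem exists_wellOrdered_superReduced_tree_general {G : Type*} [Group G] [Infinite G]
    (S : Set G) (hS : S.Finite) (hgen : Subgroup.closure S = ⊤)
    [LinearOrder ↥S] :
    ∃ R : Set (List ↥S), R.Infinite ∧
      (∀ w ∈ R, SuperReduced (w.map (Subtype.val : ↥S → G))) ∧
      (∀ w ∈ R, ∀ v : List ↥S, v <+: w → v ∈ R) ∧
      Set.InjOn (fun w : List ↥S => (w.map (Subtype.val : ↥S → G)).prod) R ∧
      Nonempty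
        ((fun v w : ↥R => List.Lex (· < ·) (v : List ↥S) (w : List ↥S)) ≃r
          ((· < ·) : ℕ → ℕ → Prop)) := by
  have := hS.to_subtype
  obtain ⟨b, hb, htake⟩ := List.exists_seq_take_eq_of_forall_length_eq
    (T := {w : List S | SuperReduced (w.map Subtype.val)})
    (fun w hw n ↦ hw.of_infix ((List.take_prefix n w).map Subtype.val).isInfix)
    (exists_superReduced_of_length_eq hS
      (Submonoid.infinite_closure_of_subgroupClosure_eq_top hgen))
  have hlen (n : ℕ) : (b n).length = n := (hb n).2
  refine ⟨Set.range b, Set.infinite_range_of_injective fun m n h ↦ ?_, ?_, ?_,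
    injOn_prod_map_range_of_take_eq _ (fun n ↦ (hb n).1) htake hlen,
    List.nonempty_relIso_range_lex _ htake hlen⟩
  · rw [← hlen m, h, hlen n]
  · rintro _ ⟨n, rfl⟩
    exact (hb n).1
  · rintro _ ⟨n, rfl⟩ v hv
    exact List.mem_range_of_prefix_of_take_eq htake hlen hv

/-- For an infinite group `G` with finite generating set `S` closed under inverses and
linearly ordered, there is an infinite, prefix-closed set `R` of super-reduced words
over `S` such that distinct words of `R` represent distinct group elements and the
lexicographic order restricted to `R` is a well-order order-isomorphic to `ℕ`
(so every element of `R` has only finitely many lexicographic predecessors in `R`). -/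
theorem exists_wellOrdered_superReduced_tree {G : Type*} [Group G] [Infinite G]
    (S : Set G) (hS : S.Finite) (hgen : Subgroup.closure S = ⊤)
    (hinv : ∀ s ∈ S, s⁻¹ ∈ S) [LinearOrder ↥S] :
    ∃ R : Set (List ↥S), R.Infinite ∧
      (∀ w ∈ R, SuperReduced (w.map (Subtype.val : ↥S → G))) ∧
      (∀ w ∈ R, ∀ v : List ↥S, v <+: w → v ∈ R) ∧
      Set.InjOn (fun w : List ↥S => (w.map (Subtype.val : ↥S → G)).prod) R ∧
      Nonempty
        ((fun v w : ↥R => List.Lex (· < ·) (v : List ↥S) (w : List ↥S)) ≃r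
          ((· < ·) : ℕ → ℕ → Prop)) :=
  exists_wellOrdered_superReduced_tree_general S hS hgen
end
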